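/- arXiv:1009.3892 — 5 statements merged into one kernel-verified Lean document; each statement's English description precedes it below -/
import Mathlib

section
/- Let X be a preordered set and let down-sets of X be ordered by inclusion. Then the down-set lattice P X = {S : Set X | S is a down-set} is completely distributive in the constructive sense: the map Sup_{PX} : Down(P X) → P X, Ψ ↦ ⋃ Ψ, is left adjoint to the map P X → Down(P X), A ↦ {S | S ⊆ A}, and the map P X → Down(P X), A ↦ {S | ∃ x ∈ A, S ⊆ ↓x} is left adjoint to Sup_{PX}. -/
/-- `S` is a down-set of the preorder `X`. -/
def IsDown {X : Type*} [Preorder X] (S : Set X) : Prop :=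
  ∀ ⦃x y : X⦄, y ≤ x → x ∈ S → y ∈ S

/-- The lattice of down-sets of `X`, ordered by inclusion. -/
abbrev DownSet (X : Type*) [Preorder X] := {S : Set X // IsDown S}

theorem isDown_iUnion {X : Type*} [Preorder X] (Ψ : Set (DownSet X)) :
    IsDown (⋃ S ∈ Ψ, (S : Set X)) := by
  intro x y hyx hx
  simp only [Set.mem_iUnion] at hx ⊢
  obtain ⟨S, hS, hxS⟩ := hx
  exact ⟨S, hS, S.2 hyx hxS⟩

theorem isDown_below {X : Type*} [Preorder X] (A : DownSet X) :
    IsDown {S : DownSet X | (S : Set X) ⊆ (A : Set X)} :=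
  fun S T hTS hS => le_trans hTS hS

theorem isDown_totallyBelow {X : Type*} [Preorder X] (A : DownSet X) :
    IsDown {S : DownSet X | ∃ x ∈ (A : Set X), (S : Set X) ⊆ {y | y ≤ x}} := by
  rintro S T hTS ⟨x, hx, hS⟩
  exact ⟨x, hx, le_trans hTS hS⟩

/-- The down-set lattice `P X` is constructively completely distributive:
union `Sup : Down(P X) → P X` is left adjoint to `A ↦ {S | S ⊆ A}`, and
`A ↦ {S | ∃ x ∈ A, S ⊆ ↓x}` is left adjoint to `Sup`. -/
theorem stmt3 {X : Type*} [Preorder X] :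
    GaloisConnection
      (fun Ψ : DownSet (DownSet X) => (⟨⋃ S ∈ (Ψ : Set (DownSet X)), (S : Set X),
        isDown_iUnion _⟩ : DownSet X))
      (fun A : DownSet X => (⟨{S : DownSet X | (S : Set X) ⊆ (A : Set X)},
        isDown_below A⟩ : DownSet (DownSet X))) ∧
    GaloisConnection
      (fun A : DownSet X => (⟨{S : DownSet X | ∃ x ∈ (A : Set X), (S : Set X) ⊆ {y | y ≤ x}},
        isDown_totallyBelow A⟩ : DownSet (DownSet X)))
      (fun Ψ : DownSet (DownSet X) => (⟨⋃ S ∈ (Ψ : Set (DownSet X)), (S : Set X),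
        isDown_iUnion _⟩ : DownSet X)) := by
  constructor
  · intro Ψ A
    constructor
    · intro h S hS x hx
      exact h (Set.mem_biUnion hS hx)
    · intro h x hx
      simp only [Set.mem_iUnion] at hx
      obtain ⟨S, hS, hxS⟩ := hx
      exact h hS hxS
  · intro A Ψ
    constructor
    · intro h x hx
      have : (⟨{y | y ≤ x}, fun a b hba ha => le_trans hba ha⟩ : DownSet X) ∈ (Ψ : Set (DownSet X)) :=
        h ⟨x, hx, fun y hy => hy⟩
      exact Set.mem_biUnion this (le_refl x)
    · rintro h S ⟨x, hx, hSx⟩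
      have hxU := h hx
      simp only [Set.mem_iUnion] at hxU
      obtain ⟨T, hT, hxT⟩ := hxU
      have hST : S ≤ T := fun y hy => T.2 (hSx hy) hxT
      exact Ψ.2 hST hT
end

section
/- Let T = (T, e, m) be a monad on a preorder-enriched category (take X = the category of partially ordered sets and monotone maps, T a 2-functor). If T e_X ≤ e_{T X} for all X, then for all X, m_X is left adjoint to e_{T X} and T e_X is left adjoint to m_X. -/
/-!
The unit laws `m ∘ e_T = id` and `m ∘ T e = id` are one triangle of each adjunction, so only
the other inequality is needed. For `m ⊣ e_T`, apply `T m` to the Kock–Zöberlein inequality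
`T e_T ≤ e_TT`: the left side becomes `id`, the right side `e_T ∘ m` by naturality of `e`.
For `T e ⊣ m`, naturality of `m` gives `T e ∘ m = m_T ∘ TT e`; 2-functoriality applied to
`T e ≤ e_T` gives `TT e ≤ T e_T`, and `m_T ∘ T e_T = id`.
-/

open CategoryTheory

/-- Application of a morphism of `PartOrd` to an element. -/
def PartOrd.ap {X Y : PartOrd} (f : X ⟶ Y) : X → Y := (show ↑X →o ↑Y from f.hom)

namespace PartOrd

lemma ap_ap_eq_of_comp_eq {X Y Z : PartOrd} {f : X ⟶ Y} {g : Y ⟶ Z} {h : X ⟶ Z}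
    (hfg : f ≫ g = h) (x : X) : ap g (ap f x) = ap h x :=
  hfg ▸ rfl

lemma ap_monotone {X Y : PartOrd} (f : X ⟶ Y) : Monotone (ap f) :=
  (show ↑X →o ↑Y from f.hom).monotone

end PartOrd

namespace CategoryTheory.Monad

open PartOrd

variable (T : Monad PartOrd) (X : PartOrd)

lemma ap_μ_ap_η (a : T.obj X) : ap (T.μ.app X) (ap (T.η.app (T.obj X)) a) = a :=
  ap_ap_eq_of_comp_eq (T.left_unit X) a

lemma ap_μ_ap_map_η (a : T.obj X) : ap (T.μ.app X) (ap (T.map (T.η.app X)) a) = a :=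
  ap_ap_eq_of_comp_eq (T.right_unit X) a

lemma le_ap_η_ap_μ
    (hKZ : ∀ a : T.obj (T.obj X),
      ap (T.map (T.η.app (T.obj X))) a ≤ ap (T.η.app (T.obj (T.obj X))) a)
    (a : T.obj (T.obj X)) : a ≤ ap (T.η.app (T.obj X)) (ap (T.μ.app X) a) :=
  calc a = ap (T.map (T.μ.app X)) (ap (T.map (T.η.app (T.obj X))) a) :=
        (ap_ap_eq_of_comp_eq (h := 𝟙 _)
          (by rw [← Functor.map_comp, T.left_unit]; exact T.map_id _) a).symm
    _ ≤ ap (T.map (T.μ.app X)) (ap (T.η.app (T.obj (T.obj X))) a) := ap_monotone _ (hKZ a)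
    _ = ap (T.η.app (T.obj X)) (ap (T.μ.app X) a) :=
        ap_ap_eq_of_comp_eq (T.η.naturality (T.μ.app X)).symm a

lemma ap_map_η_ap_μ_le
    (h2 : ∀ {X Y : PartOrd} (f g : X ⟶ Y), (∀ x, ap f x ≤ ap g x) →
      ∀ a, ap (T.map f) a ≤ ap (T.map g) a)
    (hKZ : ∀ a : T.obj X, ap (T.map (T.η.app X)) a ≤ ap (T.η.app (T.obj X)) a)
    (b : T.obj (T.obj X)) : ap (T.map (T.η.app X)) (ap (T.μ.app X) b) ≤ b :=
  calc ap (T.map (T.η.app X)) (ap (T.μ.app X) b)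
        = ap (T.μ.app (T.obj X)) (ap (T.map (T.map (T.η.app X))) b) :=
        (ap_ap_eq_of_comp_eq (T.μ.naturality (T.η.app X)) b).symm
    _ ≤ ap (T.μ.app (T.obj X)) (ap (T.map (T.η.app (T.obj X))) b) :=
        ap_monotone _ (h2 _ _ hKZ b)
    _ = b := ap_μ_ap_map_η T (T.obj X) b

lemma gc_μ_η
    (hKZ : ∀ a : T.obj (T.obj X),
      ap (T.map (T.η.app (T.obj X))) a ≤ ap (T.η.app (T.obj (T.obj X))) a) :
    GaloisConnection (ap (T.μ.app X)) (ap (T.η.app (T.obj X))) :=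
  .monotone_intro (ap_monotone _) (ap_monotone _) (le_ap_η_ap_μ T X hKZ)
    fun b => (ap_μ_ap_η T X b).le

lemma gc_map_η_μ
    (h2 : ∀ {X Y : PartOrd} (f g : X ⟶ Y), (∀ x, ap f x ≤ ap g x) →
      ∀ a, ap (T.map f) a ≤ ap (T.map g) a)
    (hKZ : ∀ a : T.obj X, ap (T.map (T.η.app X)) a ≤ ap (T.η.app (T.obj X)) a) :
    GaloisConnection (ap (T.map (T.η.app X))) (ap (T.μ.app X)) :=
  .monotone_intro (ap_monotone _) (ap_monotone _) (fun a => (ap_μ_ap_map_η T X a).ge)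
    (ap_map_η_ap_μ_le T X h2 hKZ)

end CategoryTheory.Monad

open PartOrd in
/-- Kock–Zöberlein theorem, one implication: for a 2-monad `T` on the category of posets
with `T e_X ≤ e_{T X}` for all `X`, one has `m_X ⊣ e_{T X}` and `T e_X ⊣ m_X` for all `X`. -/
theorem stmt7 (T : Monad PartOrd)
    (h2 : ∀ {X Y : PartOrd} (f g : X ⟶ Y), (∀ x, ap f x ≤ ap g x) →
      ∀ a, ap (T.map f) a ≤ ap (T.map g) a)
    (hKZ : ∀ (X : PartOrd) (a : T.obj X),
      ap (T.map (T.η.app X)) a ≤ ap (T.η.app (T.obj X)) a) :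
    ∀ X : PartOrd,
      (∀ (a : T.obj (T.obj X)) (b : T.obj X),
        ap (T.μ.app X) a ≤ b ↔ a ≤ ap (T.η.app (T.obj X)) b) ∧
      (∀ (a : T.obj X) (b : T.obj (T.obj X)),
        ap (T.map (T.η.app X)) a ≤ b ↔ a ≤ ap (T.μ.app X) b) :=
  fun X => ⟨T.gc_μ_η X (hKZ (T.obj X)), T.gc_map_η_μ X h2 (hKZ X)⟩
end

section
/- Let T be a Kock-Zöberlein monad on the category of posets (T a 2-functor with T e_X ≤ e_{T X} for all X). Then a monotone map h : T X → X is an Eilenberg–Moore algebra structure (h ∘ e_X = id and h ∘ T h = h ∘ m_X) if and only if h ∘ e_X = id; and in that case h is left adjoint to e_X. -/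
/-!
If `h ∘ e = id`, the KZ inequality `T e ≤ e_T` gives `id = T h ∘ T e ≤ T h ∘ e_T = e ∘ h`, so
`h ⊣ e`; in particular the multiplication `m`, which splits `e_T`, satisfies `m ⊣ e_T`. The
associativity law `h ∘ T h = h ∘ m` then follows by transposing across these two adjunctions.
-/

open CategoryTheory

namespace PartOrd

@[simp]
lemma ap_comp {X Y Z : PartOrd} (f : X ⟶ Y) (g : Y ⟶ Z) (x : X) :
    ap (f ≫ g) x = ap g (ap f x) := rfl

@[simp]
lemma ap_id {X : PartOrd} (x : X) : ap (𝟙 X) x = x := rfl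

lemma ap_congr {X Y : PartOrd} {f g : X ⟶ Y} (e : f = g) (x : X) : ap f x = ap g x := by
  rw [e]

end PartOrd

open PartOrd

namespace CategoryTheory.Monad

variable (T : Monad PartOrd)

lemma le_ap_unit_ap_of_unit_comp_eq_id {Y : PartOrd}
    (hKZ : ∀ a : T.obj Y, ap (T.map (T.η.app Y)) a ≤ ap (T.η.app (T.obj Y)) a)
    {k : T.obj Y ⟶ Y} (hk : T.η.app Y ≫ k = 𝟙 Y) (a : T.obj Y) :
    a ≤ ap (T.η.app Y) (ap k a) :=
  calc a = ap (T.map (T.η.app Y) ≫ T.map k) a := by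
        rw [← T.map_comp, hk]
        simp only [Functor.id_obj, Functor.map_id, ap_id]
    _ ≤ ap (T.map k) (ap (T.η.app (T.obj Y)) a) := ap_monotone (T.map k) (hKZ a)
    _ = ap (T.η.app Y) (ap k a) := ap_congr (T.η.naturality k).symm a

lemma galoisConnection_of_unit_comp_eq_id {Y : PartOrd}
    (hKZ : ∀ a : T.obj Y, ap (T.map (T.η.app Y)) a ≤ ap (T.η.app (T.obj Y)) a)
    {k : T.obj Y ⟶ Y} (hk : T.η.app Y ≫ k = 𝟙 Y) :
    GaloisConnection (ap k) (ap (T.η.app Y)) :=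
  GaloisConnection.monotone_intro (ap_monotone _) (ap_monotone k)
    (le_ap_unit_ap_of_unit_comp_eq_id T hKZ hk)
    (fun y => (ap_congr hk y).le)

lemma map_comp_eq_mu_comp_of_unit_comp_eq_id
    (h2 : ∀ {X Y : PartOrd} (f g : X ⟶ Y), (∀ x, ap f x ≤ ap g x) →
      ∀ a, ap (T.map f) a ≤ ap (T.map g) a)
    (hKZ : ∀ (X : PartOrd) (a : T.obj X),
      ap (T.map (T.η.app X)) a ≤ ap (T.η.app (T.obj X)) a)
    {X : PartOrd} {h : T.obj X ⟶ X} (he : T.η.app X ≫ h = 𝟙 X) :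
    T.map h ≫ h = T.μ.app X ≫ h := by
  have gc_h := galoisConnection_of_unit_comp_eq_id T (hKZ X) he
  have gc_μ := galoisConnection_of_unit_comp_eq_id T (hKZ (T.obj X)) (T.left_unit X)
  refine PartOrd.ext fun b => le_antisymm ?_ ?_
  · show ap h (ap (T.map h) b) ≤ ap h (ap (T.μ.app X) b)
    rw [gc_h]
    calc ap (T.map h) b ≤ ap (T.map h) (ap (T.η.app (T.obj X)) (ap (T.μ.app X) b)) :=
          ap_monotone (T.map h) (gc_μ.le_u_l b)
      _ = ap (T.η.app X) (ap h (ap (T.μ.app X) b)) := (ap_congr (T.η.naturality h) _).symm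
  · show ap h (ap (T.μ.app X) b) ≤ ap h (ap (T.map h) b)
    refine ap_monotone h ((gc_μ _ _).2 ?_)
    calc b = ap (T.map (𝟙 _)) b := by rw [Functor.map_id, ap_id]
      _ ≤ ap (T.map (h ≫ T.η.app X)) b := h2 _ _ gc_h.le_u_l b
      _ = ap (T.map (T.η.app X)) (ap (T.map h) b) := by rw [T.map_comp, ap_comp]
      _ ≤ ap (T.η.app (T.obj X)) (ap (T.map h) b) := hKZ X _

end CategoryTheory.Monad

open PartOrd in
/-- For a Kock–Zöberlein monad `T` on posets, a monotone map `h : T X → X` is an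
Eilenberg–Moore algebra structure iff `h ∘ e_X = id`; and in that case `h ⊣ e_X`. -/
theorem stmt8 (T : Monad PartOrd)
    (h2 : ∀ {X Y : PartOrd} (f g : X ⟶ Y), (∀ x, ap f x ≤ ap g x) →
      ∀ a, ap (T.map f) a ≤ ap (T.map g) a)
    (hKZ : ∀ (X : PartOrd) (a : T.obj X),
      ap (T.map (T.η.app X)) a ≤ ap (T.η.app (T.obj X)) a)
    (X : PartOrd) (h : T.obj X ⟶ X) :
    ((T.η.app X ≫ h = 𝟙 X ∧ T.map h ≫ h = T.μ.app X ≫ h) ↔ T.η.app X ≫ h = 𝟙 X) ∧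
    (T.η.app X ≫ h = 𝟙 X →
      ∀ (a : T.obj X) (x : X), ap h a ≤ x ↔ a ≤ ap (T.η.app X) x) :=
  ⟨⟨And.left, fun he => ⟨he, T.map_comp_eq_mu_comp_of_unit_comp_eq_id @h2 hKZ he⟩⟩,
    fun he => T.galoisConnection_of_unit_comp_eq_id (hKZ X) he⟩
end

section
/- For a relation r ⊆ X × Y and ultrafilters 𝔵 on X and 𝔶 on Y: 𝔵 (U r) 𝔶 (i.e. ∀ A ∈ 𝔵, ∀ B ∈ 𝔶, ∃ x ∈ A, y ∈ B with x r y) if and only if there exists an ultrafilter 𝔴 on the set {(x,y) | x r y} (equivalently on X × Y concentrated on r) whose projections to X and Y are 𝔵 and 𝔶 respectively. -/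
/-- The ultrafilter extension of a relation `r : X ⇸ Y`. -/
def URel {X Y : Type*} (r : X → Y → Prop) (𝔵 : Ultrafilter X) (𝔶 : Ultrafilter Y) : Prop :=
  ∀ A ∈ 𝔵, ∀ B ∈ 𝔶, ∃ x ∈ A, ∃ y ∈ B, r x y

/-- `𝔵 (U r) 𝔶` iff there is an ultrafilter on `X × Y` concentrated on `r` whose
projections are `𝔵` and `𝔶`. -/
theorem stmt16 {X Y : Type*} (r : X → Y → Prop) (𝔵 : Ultrafilter X) (𝔶 : Ultrafilter Y) :
    URel r 𝔵 𝔶 ↔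
    ∃ 𝔴 : Ultrafilter (X × Y), {p : X × Y | r p.1 p.2} ∈ 𝔴 ∧
      Ultrafilter.map Prod.fst 𝔴 = 𝔵 ∧ Ultrafilter.map Prod.snd 𝔴 = 𝔶 := by
  constructor
  · intro h
    set F : Filter (X × Y) := (𝔵 : Filter X) ×ˢ (𝔶 : Filter Y) ⊓ Filter.principal {p : X × Y | r p.1 p.2}
      with hF
    have hne : F.NeBot := by
      rw [Filter.inf_principal_neBot_iff]
      intro S hS
      obtain ⟨A, hA, B, hB, hAB⟩ := Filter.mem_prod_iff.mp hS
      obtain ⟨x, hx, y, hy, hxy⟩ := h A hA B hB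
      exact ⟨(x, y), hAB ⟨hx, hy⟩, hxy⟩
    obtain ⟨𝔴, h𝔴⟩ := Ultrafilter.exists_le F
    have hr : {p : X × Y | r p.1 p.2} ∈ 𝔴 := h𝔴 (Filter.le_def.mp inf_le_right _ (Filter.mem_principal_self _))
    have h1 : (Ultrafilter.map Prod.fst 𝔴 : Filter X) ≤ 𝔵 := by
      calc (Ultrafilter.map Prod.fst 𝔴 : Filter X) = Filter.map Prod.fst (𝔴 : Filter (X × Y)) :=
            rfl
        _ ≤ Filter.map Prod.fst F := Filter.map_mono h𝔴
        _ ≤ Filter.map Prod.fst ((𝔵 : Filter X) ×ˢ (𝔶 : Filter Y)) :=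
            Filter.map_mono inf_le_left
        _ ≤ 𝔵 := Filter.tendsto_fst
    have h2 : (Ultrafilter.map Prod.snd 𝔴 : Filter Y) ≤ 𝔶 := by
      calc (Ultrafilter.map Prod.snd 𝔴 : Filter Y) = Filter.map Prod.snd (𝔴 : Filter (X × Y)) :=
            rfl
        _ ≤ Filter.map Prod.snd F := Filter.map_mono h𝔴
        _ ≤ Filter.map Prod.snd ((𝔵 : Filter X) ×ˢ (𝔶 : Filter Y)) :=
            Filter.map_mono inf_le_left
        _ ≤ 𝔶 := Filter.tendsto_snd
    exact ⟨𝔴, hr, Ultrafilter.coe_injective (le_antisymm h1 (𝔵.unique h1).ge),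
      Ultrafilter.coe_injective (le_antisymm h2 (𝔶.unique h2).ge)⟩
  · rintro ⟨𝔴, hr, h1, h2⟩ A hA B hB
    have hA' : Prod.fst ⁻¹' A ∈ 𝔴 := by rw [← h1] at hA; exact hA
    have hB' : Prod.snd ⁻¹' B ∈ 𝔴 := by rw [← h2] at hB; exact hB
    obtain ⟨⟨x, y⟩, hx, hy, hxy⟩ := (𝔴.nonempty_of_mem (Filter.inter_mem hA' (Filter.inter_mem hB' hr)))
    exact ⟨x, hx, y, hy, hxy⟩
end

section
/- Let L be a complete lattice and F L its filter space with basic opens x^# = {𝔣 | x ∈ 𝔣}. For any open subset 𝒜 ⊆ F L (in the topology generated by the x^#), the meet of all x with 𝒜 ⊆ x^# equals the join of all y with y^# ⊆ 𝒜: ⋀{x ∈ L | 𝒜 ⊆ x^#} ≤ ⋁{y ∈ L | y^# ⊆ 𝒜}, and hence equality holds (the reverse inequality being automatic). -/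
/-- The set of (possibly improper) filters on a lattice with top: up-closed subsets
containing `⊤` and closed under binary meets. -/
def LatticeFilter (L : Type*) [Lattice L] [OrderTop L] :=
  {𝔣 : Set L // (∀ x ∈ 𝔣, ∀ y, x ≤ y → y ∈ 𝔣) ∧ ⊤ ∈ 𝔣 ∧ ∀ x ∈ 𝔣, ∀ y ∈ 𝔣, x ⊓ y ∈ 𝔣}

/-- The basic open set `x^# = {𝔣 | x ∈ 𝔣}` of the filter space. -/
def hashSet {L : Type*} [Lattice L] [OrderTop L] (x : L) : Set (LatticeFilter L) :=
  {𝔣 | x ∈ 𝔣.1}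

/-- For a complete lattice `L` and an open subset `𝒜` of the filter space `F L` (open in
the topology with basis `{x^#}`), the meet of all `x` with `𝒜 ⊆ x^#` equals the join of
all `y` with `y^# ⊆ 𝒜`. -/
theorem stmt19 {L : Type*} [CompleteLattice L] (𝒜 : Set (LatticeFilter L))
    (hopen : ∀ 𝔣 ∈ 𝒜, ∃ u ∈ 𝔣.1, hashSet u ⊆ 𝒜) :
    sInf {x : L | 𝒜 ⊆ hashSet x} ≤ sSup {y : L | hashSet y ⊆ 𝒜} ∧
    sInf {x : L | 𝒜 ⊆ hashSet x} = sSup {y : L | hashSet y ⊆ 𝒜} := by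

  have key : 𝒜 ⊆ hashSet (sSup {y : L | hashSet y ⊆ 𝒜}) := by
    intro 𝔣 h𝔣
    obtain ⟨u, hu, husub⟩ := hopen 𝔣 h𝔣
    exact 𝔣.2.1 u hu _ (le_sSup husub)
  have h1 : sInf {x : L | 𝒜 ⊆ hashSet x} ≤ sSup {y : L | hashSet y ⊆ 𝒜} := sInf_le key
  refine ⟨h1, le_antisymm h1 ?_⟩
  apply sSup_le
  intro y hy
  apply le_sInf
  intro x hx
  have hmem : (⟨{t | y ≤ t}, fun a ha b hab => le_trans ha hab, le_top,
      fun a ha b hb => le_inf ha hb⟩ : LatticeFilter L) ∈ hashSet y := le_refl y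
  exact hx (hy hmem)
end
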